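/- arXiv:2009.05223 — 4 statements merged into one kernel-verified Lean document; each statement's English description precedes it below -/
import Mathlib

section
/- Let f, g ∈ ℚ[t] be coprime polynomials, not both constant. Then for every prime p there exists a constant c_p > 0 such that for all t ∈ ℚ, max(|f(t)|_p, |g(t)|_p) ≥ c_p, where |·|_p is the p-adic absolute value. -/
/-!
On a ball `|t| ≤ M` the Bézout identity `u f + v g = 1` gives
`1 ≤ (sup |u| + sup |v|) · max (|f t|, |g t|)`, since polynomials are bounded on balls.
Outside a large enough ball the non-constant polynomial `f` itself has `|f t| ≥ 1`,
because `|f t| → ∞` as `|t| → ∞`.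
-/

open Polynomial Filter IsAbsoluteValue

namespace Polynomial

variable {R k : Type*} [Field k] [LinearOrder k] [IsStrictOrderedRing k]

theorem exists_abv_eval_le_of_abv_le [Semiring R] [Nontrivial R] (abv : R → k)
    [IsAbsoluteValue abv] (a : R[X]) (M : k) : ∃ B, ∀ t, abv t ≤ M → abv (a.eval t) ≤ B := by
  induction a using Polynomial.induction_on' with
  | add a b iha ihb =>
    obtain ⟨Ba, ha⟩ := iha
    obtain ⟨Bb, hb⟩ := ihb
    refine ⟨Ba + Bb, fun t ht => ?_⟩
    rw [eval_add]
    exact (abv_add abv _ _).trans (add_le_add (ha t ht) (hb t ht))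
  | monomial n c =>
    refine ⟨abv c * M ^ n, fun t ht => ?_⟩
    rw [eval_monomial, abv_mul abv, abv_pow abv]
    gcongr

theorem exists_one_le_abv_eval_of_le_abv [Ring R] (abv : R → k) [IsAbsoluteValue abv]
    {a : R[X]} (ha : 0 < a.degree) : ∃ M, ∀ t, M ≤ abv t → 1 ≤ abv (a.eval t) := by
  have htendsto : Tendsto (fun t => abv (a.eval t)) (comap abv atTop) atTop :=
    tendsto_abv_atTop abv a ha tendsto_comap
  simpa using ((atTop_basis.comap abv).eventually_iff).mp (htendsto.eventually_ge_atTop 1)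

theorem exists_pos_le_max_abv_eval_of_isCoprime [CommRing R] [Nontrivial R] (abv : R → k)
    [IsAbsoluteValue abv] {f g : R[X]} (hfg : IsCoprime f g) (hf : 0 < f.degree) :
    ∃ c, 0 < c ∧ ∀ t, c ≤ max (abv (f.eval t)) (abv (g.eval t)) := by
  obtain ⟨M, hlarge⟩ := exists_one_le_abv_eval_of_le_abv abv hf
  obtain ⟨u, v, huv⟩ := hfg
  obtain ⟨Bu, hBu⟩ := exists_abv_eval_le_of_abv_le abv u M
  obtain ⟨Bv, hBv⟩ := exists_abv_eval_le_of_abv_le abv v M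
  have hsmall : ∀ t, abv t ≤ M →
      1 ≤ (Bu + Bv) * max (abv (f.eval t)) (abv (g.eval t)) := by
    intro t ht
    have hbezout : u.eval t * f.eval t + v.eval t * g.eval t = 1 := by
      simpa using congrArg (eval t) huv
    have hu := hBu t ht
    have hv := hBv t ht
    calc 1 = abv (u.eval t * f.eval t + v.eval t * g.eval t) := by rw [hbezout, abv_one abv]
      _ ≤ abv (u.eval t) * abv (f.eval t) + abv (v.eval t) * abv (g.eval t) :=
        (abv_add abv _ _).trans_eq (by rw [abv_mul abv, abv_mul abv])
      _ ≤ Bu * max (abv (f.eval t)) (abv (g.eval t)) +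
          Bv * max (abv (f.eval t)) (abv (g.eval t)) := by
        gcongr
        · exact (abv_nonneg abv _).trans hu
        · exact le_max_left _ _
        · exact (abv_nonneg abv _).trans hv
        · exact le_max_right _ _
      _ = (Bu + Bv) * max (abv (f.eval t)) (abv (g.eval t)) := by ring
  have hK : (0 : k) < max 1 (Bu + Bv) := lt_max_of_lt_left one_pos
  refine ⟨min 1 (max 1 (Bu + Bv))⁻¹, lt_min one_pos (inv_pos.mpr hK), fun t => ?_⟩
  rcases le_or_gt M (abv t) with ht | ht
  · exact (min_le_left _ _).trans ((hlarge t ht).trans (le_max_left _ _))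
  · refine (min_le_right _ _).trans ((inv_le_iff_one_le_mul₀' hK).mpr ?_)
    exact (hsmall t ht.le).trans (mul_le_mul_of_nonneg_right (le_max_right _ _)
      ((abv_nonneg abv _).trans (le_max_left _ _)))

end Polynomial

/-- For coprime `f, g ∈ ℚ[t]`, not both constant, and every prime `p`, there is a
constant `c_p > 0` such that `max(|f(t)|_p, |g(t)|_p) ≥ c_p` for all `t ∈ ℚ`. -/
theorem stmt_0 (f g : Polynomial ℚ) (hfg : IsCoprime f g)
    (hdeg : 0 < max f.natDegree g.natDegree) (p : ℕ) (hp : p.Prime) :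
    ∃ c : ℚ, 0 < c ∧ ∀ t : ℚ, c ≤ max (padicNorm p (f.eval t)) (padicNorm p (g.eval t)) := by
  have : Fact p.Prime := ⟨hp⟩
  rcases lt_max_iff.mp hdeg with hf | hg
  · exact exists_pos_le_max_abv_eval_of_isCoprime (padicNorm p) hfg
      (natDegree_pos_iff_degree_pos.mp hf)
  · obtain ⟨c, hc, hle⟩ := exists_pos_le_max_abv_eval_of_isCoprime (padicNorm p) hfg.symm
      (natDegree_pos_iff_degree_pos.mp hg)
    exact ⟨c, hc, fun t => max_comm (padicNorm p (f.eval t)) _ ▸ hle t⟩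
end

section
/- For the multiplicative function B⁽⁴⁾ with B⁽⁴⁾(p^k) = 4k+1 if p ≡ 1 (mod 4) and B⁽⁴⁾(p^k) = 1 otherwise, the Dirichlet series ∑_{n ≥ 1} B⁽⁴⁾(n)/n^s converges for real s > 1 and satisfies ∑_{n ≥ 1} B⁽⁴⁾(n)/n^s = ζ(s) · ∏_{p ≡ 1 mod 4} (1 + 3p^{-s})/(1 - p^{-s}). -/
/-!
`B⁽⁴⁾ = g4 * ζ` for the multiplicative function `g4` that is `4` on the powers `p^k`, `k ≥ 1`, of
primes `p ≡ 1 mod 4` and `0` on all other prime powers. Since `g4 ≤ ζ^4 = d₄` pointwise, its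
Dirichlet series converges absolutely for `re s > 1`, so `L(B⁽⁴⁾, s) = ζ(s) L(g4, s)` and `L(g4, s)`
has an Euler product whose factor at `p ≡ 1 mod 4` is `1 + 4x/(1 - x) = (1 + 3x)/(1 - x)`,
`x = p^{-s}`.
-/

/-- `B⁽⁴⁾(n) = ∏_{p^k ∥ n, p ≡ 1 mod 4} (4k + 1)`. -/
def B4 (n : ℕ) : ℕ :=
  ∏ p ∈ n.primeFactors.filter (fun p => p % 4 = 1), (4 * n.factorization p + 1)

open ArithmeticFunction LSeries
open scoped ArithmeticFunction.zeta LSeries.notation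

namespace ArithmeticFunction

theorem IsMultiplicative.le_of_le_on_prime_powers {f g : ArithmeticFunction ℕ}
    (hf : f.IsMultiplicative) (hg : g.IsMultiplicative)
    (h : ∀ {p k : ℕ}, p.Prime → k ≠ 0 → f (p ^ k) ≤ g (p ^ k)) (n : ℕ) : f n ≤ g n := by
  rcases eq_or_ne n 0 with rfl | hn
  · simp
  rw [hf.multiplicative_factorization f hn, hg.multiplicative_factorization g hn]
  exact Finset.prod_le_prod' fun p hp =>
    h (Nat.prime_of_mem_primeFactors (n.support_factorization ▸ hp)) (Finsupp.mem_support_iff.mp hp)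

theorem add_le_mul_zeta_apply (f : ArithmeticFunction ℕ) {n : ℕ} (hn : 1 < n) :
    f 1 + f n ≤ (f * ζ) n := by
  rw [mul_zeta_apply, ← Finset.sum_pair hn.ne]
  exact Finset.sum_le_sum_of_subset <| Finset.insert_subset (Nat.one_mem_divisors.mpr (by omega))
    (Finset.singleton_subset_iff.mpr (Nat.mem_divisors_self _ (by omega)))

theorem le_zeta_pow_apply (k : ℕ) {n : ℕ} (hn : 1 < n) : k ≤ (ζ ^ k : ArithmeticFunction ℕ) n := by
  induction k with
  | zero => exact Nat.zero_le _
  | succ k ih =>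
    have h := add_le_mul_zeta_apply (ζ ^ k) hn
    rw [isMultiplicative_zeta.pow.map_one] at h
    rw [pow_succ]
    omega

theorem LSeriesSummable_zeta_pow (k : ℕ) {s : ℂ} (hs : 1 < s.re) :
    LSeriesSummable ↗(ζ ^ k : ArithmeticFunction ℕ) s := by
  induction k with
  | zero =>
    refine LSeriesSummable_of_bounded_of_one_lt_re (m := 1) (fun n _ => ?_) hs
    simp only [pow_zero, one_apply]
    split_ifs <;> simp
  | succ k ih =>
    have h := LSeriesSummable_mul (f := (ζ ^ k : ArithmeticFunction ℕ)) (g := ζ) ih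
      (LSeriesSummable_zeta_iff.mpr hs)
    rwa [← natCoe_mul, ← pow_succ] at h

theorem IsMultiplicative.LSeries_eulerProduct_tprod {f : ArithmeticFunction ℂ}
    (hf : f.IsMultiplicative) {s : ℂ} (hsum : Summable fun n => ‖term f s n‖) :
    ∏' p : Nat.Primes, ∑' e, term f s (p ^ e) = L f s := by
  refine EulerProduct.eulerProduct_tprod (by simp [hf.map_one]) (fun {m n} hmn => ?_) hsum
    (term_zero f s)
  rcases eq_or_ne m 0 with rfl | hm
  · simp
  rcases eq_or_ne n 0 with rfl | hn
  · simp
  simp only [term_of_ne_zero (mul_ne_zero hm hn), term_of_ne_zero hm, term_of_ne_zero hn,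
    hf.map_mul_of_coprime hmn, Nat.cast_mul, Complex.natCast_mul_natCast_cpow, mul_div_mul_comm]

end ArithmeticFunction

theorem LSeries.term_pow (f : ℕ → ℂ) (s : ℂ) {p : ℕ} (hp : p ≠ 0) (e : ℕ) :
    term f s (p ^ e) = f (p ^ e) * ((p : ℂ) ^ (-s)) ^ e := by
  rw [term_of_ne_zero (pow_ne_zero e hp), div_eq_mul_inv, ← Complex.cpow_neg, Nat.cast_pow,
    ← Complex.natCast_cpow_natCast_mul, Complex.cpow_nat_mul]

theorem LSeriesSummable.summable_norm_nat_add_one_div_rpow {f : ℕ → ℂ} {s : ℝ}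
    (h : LSeriesSummable f s) : Summable fun n : ℕ => ‖f (n + 1)‖ / ((n : ℝ) + 1) ^ s := by
  simpa only [norm_term_eq, Nat.add_one_ne_zero, if_false, Nat.cast_add_one, Complex.ofReal_re]
    using (summable_nat_add_iff 1).mpr h.norm

theorem LSeriesSummable.LSeries_eq_tsum_nat_add_one {f : ℕ → ℂ} {s : ℂ}
    (h : LSeriesSummable f s) : L f s = ∑' n : ℕ, f (n + 1) / ((n : ℂ) + 1) ^ s := by
  rw [LSeries, h.tsum_eq_zero_add, term_zero, zero_add]
  simp [term_of_ne_zero]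

theorem Complex.norm_natCast_cpow_neg_lt_one {p : ℕ} (hp : 1 < p) {s : ℂ} (hs : 0 < s.re) :
    ‖(p : ℂ) ^ (-s)‖ < 1 := by
  rw [norm_natCast_cpow_of_pos (by omega), neg_re]
  exact Real.rpow_lt_one_of_one_lt_of_neg (by exact_mod_cast hp) (neg_lt_zero.mpr hs)

def g4 : ArithmeticFunction ℕ := prodPrimeFactors fun p => if p % 4 = 1 then 4 else 0

theorem isMultiplicative_g4 : g4.IsMultiplicative := IsMultiplicative.prodPrimeFactors _

theorem g4_apply_prime_pow {p k : ℕ} (hp : p.Prime) (hk : k ≠ 0) :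
    g4 (p ^ k) = if p % 4 = 1 then 4 else 0 := by
  rw [g4, prodPrimeFactors_apply (pow_ne_zero k hp.ne_zero), Nat.primeFactors_prime_pow hk hp,
    Finset.prod_singleton]

theorem g4_mul_zeta_apply_prime_pow {p : ℕ} (hp : p.Prime) (k : ℕ) :
    (g4 * ζ) (p ^ k) = if p % 4 = 1 then 4 * k + 1 else 1 := by
  rw [mul_zeta_apply, Nat.sum_divisors_prime_pow hp, Finset.sum_range_succ',
    Finset.sum_congr rfl fun i _ => g4_apply_prime_pow hp i.succ_ne_zero, pow_zero,
    isMultiplicative_g4.map_one, Finset.sum_const, Finset.card_range, smul_eq_mul]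
  split_ifs <;> ring

theorem B4_eq_factorization_prod (n : ℕ) :
    B4 n = n.factorization.prod fun p k => if p % 4 = 1 then 4 * k + 1 else 1 := by
  rw [B4, Finset.prod_filter, Finsupp.prod, Nat.support_factorization]

theorem B4_eq_g4_mul_zeta {n : ℕ} (hn : n ≠ 0) : B4 n = (g4 * ζ) n := by
  rw [B4_eq_factorization_prod,
    (isMultiplicative_g4.mul isMultiplicative_zeta).multiplicative_factorization _ hn]
  refine Finsupp.prod_congr fun p hp => ?_
  rw [g4_mul_zeta_apply_prime_pow (Nat.prime_of_mem_primeFactors (n.support_factorization ▸ hp))]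

theorem B4_eq_coe_g4_mul_zeta {n : ℕ} (hn : n ≠ 0) :
    (B4 n : ℂ) = ((g4 : ArithmeticFunction ℂ) * ζ) n := by
  rw [← natCoe_mul, natCoe_apply, B4_eq_g4_mul_zeta hn]

theorem g4_le_zeta_pow (n : ℕ) : g4 n ≤ (ζ ^ 4 : ArithmeticFunction ℕ) n := by
  refine isMultiplicative_g4.le_of_le_on_prime_powers isMultiplicative_zeta.pow (fun hp hk => ?_) n
  rw [g4_apply_prime_pow hp hk]
  exact (ite_le_sup _ _ _).trans (le_zeta_pow_apply 4 (Nat.one_lt_pow hk hp.one_lt))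

theorem summable_norm_term_g4 {s : ℂ} (hs : 1 < s.re) : Summable fun n => ‖term ↗g4 s n‖ :=
  (LSeriesSummable_zeta_pow 4 hs).norm.of_nonneg_of_le (fun _ => norm_nonneg _)
    fun n => norm_term_le s (by simpa using g4_le_zeta_pow n)

theorem term_g4_prime_pow {p : ℕ} (hp : p.Prime) (s : ℂ) (e : ℕ) :
    term ↗g4 s (p ^ e) =
      if e = 0 then 1 else (if p % 4 = 1 then 4 else 0) * ((p : ℂ) ^ (-s)) ^ e := by
  rw [term_pow _ _ hp.ne_zero]
  rcases eq_or_ne e 0 with rfl | he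
  · simp [isMultiplicative_g4.map_one]
  · rw [g4_apply_prime_pow hp he, if_neg he]
    split_ifs <;> simp

theorem tsum_term_g4_prime_pow {p : ℕ} (hp : p.Prime) {s : ℂ} (hs : 0 < s.re) :
    ∑' e, term ↗g4 s (p ^ e) =
      if p % 4 = 1 then (1 + 3 * (p : ℂ) ^ (-s)) / (1 - (p : ℂ) ^ (-s)) else 1 := by
  simp_rw [term_g4_prime_pow hp]
  split_ifs with h4
  · have hx := Complex.norm_natCast_cpow_neg_lt_one hp.one_lt hs
    have hx1 : 1 - (p : ℂ) ^ (-s) ≠ 0 := sub_ne_zero.mpr fun h => by simp [← h] at hx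
    calc ∑' e : ℕ, (if e = 0 then 1 else 4 * ((p : ℂ) ^ (-s)) ^ e)
        = ∑' e : ℕ, (4 * ((p : ℂ) ^ (-s)) ^ e - if e = 0 then 3 else 0) :=
          tsum_congr fun e => by split_ifs with he <;> norm_num [he]
      _ = 4 * (1 - (p : ℂ) ^ (-s))⁻¹ - 3 :=
          (((hasSum_geometric_of_norm_lt_one hx).mul_left 4).sub (hasSum_ite_eq 0 3)).tsum_eq
      _ = (1 + 3 * (p : ℂ) ^ (-s)) / (1 - (p : ℂ) ^ (-s)) := by field_simp; ring
  · simp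

theorem LSeriesSummable_coe_g4 {s : ℂ} (hs : 1 < s.re) :
    LSeriesSummable ⇑(g4 : ArithmeticFunction ℂ) s :=
  (summable_norm_term_g4 hs).of_norm

theorem LSeriesSummable_B4 {s : ℂ} (hs : 1 < s.re) : LSeriesSummable ↗B4 s :=
  (LSeriesSummable_congr s B4_eq_coe_g4_mul_zeta).mpr <|
    LSeriesSummable_mul (g := ζ) (LSeriesSummable_coe_g4 hs) (LSeriesSummable_zeta_iff.mpr hs)

theorem LSeries_B4_eq {s : ℂ} (hs : 1 < s.re) :
    L ↗B4 s = riemannZeta s *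
      ∏' p : Nat.Primes,
        if (p : ℕ) % 4 = 1 then (1 + 3 * (p : ℂ) ^ (-s)) / (1 - (p : ℂ) ^ (-s)) else 1 := by
  rw [LSeries_congr B4_eq_coe_g4_mul_zeta,
    LSeries_mul' (g := ζ) (LSeriesSummable_coe_g4 hs) (LSeriesSummable_zeta_iff.mpr hs),
    mul_comm, ← isMultiplicative_g4.natCast.LSeries_eulerProduct_tprod (summable_norm_term_g4 hs),
    ← LSeries_zeta_eq_riemannZeta hs]
  congr 1
  exact tprod_congr fun p => tsum_term_g4_prime_pow p.prop (by linarith)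

/-- The Dirichlet series of `B⁽⁴⁾` converges for real `s > 1` and equals
`ζ(s) · ∏_{p ≡ 1 mod 4} (1 + 3p^{-s})/(1 - p^{-s})`. -/
theorem stmt_5 (s : ℝ) (hs : 1 < s) :
    Summable (fun n : ℕ => (B4 (n + 1) : ℝ) / ((n : ℝ) + 1) ^ s) ∧
      ∑' n : ℕ, (B4 (n + 1) : ℂ) / ((n : ℂ) + 1) ^ (s : ℂ) =
        riemannZeta s *
          ∏' p : Nat.Primes,
            (if (p : ℕ) % 4 = 1 then
              (1 + 3 * ((p : ℕ) : ℂ) ^ (-(s : ℂ))) / (1 - ((p : ℕ) : ℂ) ^ (-(s : ℂ)))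
            else 1) := by
  have hs' : 1 < (s : ℂ).re := by simpa using hs
  have hsum := LSeriesSummable_B4 hs'
  refine ⟨by simpa using hsum.summable_norm_nat_add_one_div_rpow, ?_⟩
  rw [← hsum.LSeries_eq_tsum_nat_add_one, LSeries_B4_eq hs']
end

section
/- For N = 5, 10, 13, or 25, the short exact sequence 1 → {±1} → Γ₀(N) → PΓ₀(N) → 1 is non-split, i.e., there is no subgroup of Γ₀(N) mapping isomorphically onto Γ₀(N)/{±I}. Equivalently stated group-theoretically: there is no subgroup H ≤ Γ₀(N) of index 2 with −I ∉ H. -/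
/-!
An index-two subgroup contains every square, so it suffices to exhibit `g ∈ Γ₀(N)` with
`g ^ 2 = -I`. Whenever `N ∣ a ^ 2 + 1`, writing `a ^ 2 + 1 = -b N`, the trace-zero matrix
`!![a, b; N, -a]` is such an element; for `N = 5, 10, 13, 25` take `a = 2, 3, 5, 7`.
-/

open CongruenceSubgroup

open Matrix in
lemma Matrix.SpecialLinearGroup.exists_mem_Gamma0_mul_self_eq_neg_one {N : ℕ} {a : ℤ}
    (ha : (N : ℤ) ∣ a ^ 2 + 1) :
    ∃ g ∈ Gamma0 N, g * g = (-1 : SpecialLinearGroup (Fin 2) ℤ) := by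
  obtain ⟨k, hk⟩ := ha
  let g : SpecialLinearGroup (Fin 2) ℤ :=
    ⟨!![a, -k; (N : ℤ), -a], by simp [det_fin_two]; linear_combination -hk⟩
  refine ⟨g, by rw [Gamma0_mem]; simp [g], Subtype.ext ?_⟩
  rw [SpecialLinearGroup.coe_mul, SpecialLinearGroup.coe_neg, SpecialLinearGroup.coe_one,
    mul_fin_two]
  ext i j
  fin_cases i <;> fin_cases j <;> simp
  · linear_combination hk
  · ring
  · ring
  · linear_combination hk

lemma Subgroup.mul_self_mem_of_relIndex_eq_two {G : Type*} [Group G] {H K : Subgroup G}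
    (hH : H.relIndex K = 2) {g : G} (hg : g ∈ K) : g * g ∈ H :=
  mem_subgroupOf.mp (mul_self_mem_of_index_two hH ⟨g, hg⟩)

/-- For `N = 5, 10, 13, 25`, the sequence `1 → {±1} → Γ₀(N) → PΓ₀(N) → 1` is non-split:
there is no subgroup `H ≤ Γ₀(N)` of index 2 in `Γ₀(N)` with `−I ∉ H`. -/
theorem stmt_9 (N : ℕ) (hN : N ∈ ({5, 10, 13, 25} : Finset ℕ)) :
    ¬ ∃ H : Subgroup (Matrix.SpecialLinearGroup (Fin 2) ℤ),
        H ≤ Gamma0 N ∧ H.relIndex (Gamma0 N) = 2 ∧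
          (-1 : Matrix.SpecialLinearGroup (Fin 2) ℤ) ∉ H := by
  rintro ⟨H, -, hH, hneg⟩
  obtain ⟨a, ha⟩ : ∃ a : ℤ, (N : ℤ) ∣ a ^ 2 + 1 := by
    fin_cases hN
    exacts [⟨2, by norm_num⟩, ⟨3, by norm_num⟩, ⟨5, by norm_num⟩, ⟨7, by norm_num⟩]
  obtain ⟨g, hg, hsq⟩ := Matrix.SpecialLinearGroup.exists_mem_Gamma0_mul_self_eq_neg_one ha
  exact hneg (hsq ▸ Subgroup.mul_self_mem_of_relIndex_eq_two hH hg)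
end

section
/- Let f, g ∈ ℤ[t] be coprime polynomials of degrees r and s, and let m, n be coprime positive integers with max(r/2, s/3) = n/m. Then for every prime p there exists a constant K_p ≥ 0, with K_p = 0 for all but finitely many p, such that for all t ∈ ℚ with v_p(t) < 0: |max(⌈−v_p(f(t))/2⌉, ⌈−v_p(g(t))/3⌉) − ⌈−(n/m)·v_p(t)⌉| ≤ K_p, where v_p denotes the p-adic valuation. -/
/-!
Write `k = -v_p(t) > 0`. Integrality of the coefficients gives `v_p(f(t)) ≥ r·v_p(t)`, so the
scaling exponent never exceeds `⌈(n/m)k⌉`. Once `k` exceeds the valuations of the leading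
coefficients, the leading term dominates and `v_p(f(t)) = v_p(lc f) - rk` exactly, which puts the
scaling exponent within `max(v_p(lc f), v_p(lc g))` of `⌈(n/m)k⌉`; for `p ∤ lc f · lc g` this
covers every `t` with error `0`. The finitely many remaining values of `k` are handled by a
Bézout identity `u f + w g = 1`: at least one of `v_p(f(t))`, `v_p(g(t))` is bounded above by
`-v_p(u(t))` resp. `-v_p(w(t))`, and these are bounded since `k` is.
-/

open Polynomial

namespace padicValRat

variable {p : ℕ} [Fact p.Prime]

theorem le_sum {ι : Type*} {s : Finset ι} {x : ι → ℚ} {c : ℤ}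
    (hx : ∀ i ∈ s, x i ≠ 0 → c ≤ padicValRat p (x i)) (hs : ∑ i ∈ s, x i ≠ 0) :
    c ≤ padicValRat p (∑ i ∈ s, x i) := by
  induction s using Finset.cons_induction with
  | empty => simp at hs
  | cons a s ha ih =>
    rw [Finset.sum_cons] at hs ⊢
    have hs' := fun i hi => hx i (Finset.mem_cons_of_mem hi)
    by_cases hxa : x a = 0
    · rw [hxa, zero_add] at hs ⊢
      exact ih hs' hs
    by_cases hrest : ∑ i ∈ s, x i = 0
    · rw [hrest, add_zero] at hs ⊢
      exact hx a (Finset.mem_cons_self a s) hxa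
    exact (le_min (hx a (Finset.mem_cons_self a s) hxa) (ih hs' hrest)).trans
      (min_le_padicValRat_add hs)

theorem nonpos_of_add_eq_one {q r : ℚ} (h : q + r = 1) :
    (q ≠ 0 ∧ padicValRat p q ≤ 0) ∨ (r ≠ 0 ∧ padicValRat p r ≤ 0) := by
  by_cases hq : q = 0
  · rw [hq, zero_add] at h
    simp [h]
  by_cases hr : r = 0
  · rw [hr, add_zero] at h
    simp [h]
  have hmin := min_le_padicValRat_add (p := p) (h ▸ one_ne_zero : q + r ≠ 0)
  rw [h, padicValRat.one] at hmin
  rcases min_le_iff.mp hmin with hq' | hr'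
  exacts [Or.inl ⟨hq, hq'⟩, Or.inr ⟨hr, hr'⟩]

end padicValRat

namespace Polynomial

variable {p : ℕ} [Fact p.Prime]

theorem le_padicValRat_eval {u : ℚ[X]} {c : ℤ}
    (hc : ∀ i, u.coeff i ≠ 0 → c ≤ padicValRat p (u.coeff i)) {t : ℚ}
    (ht : padicValRat p t ≤ 0) (hu : u.eval t ≠ 0) :
    c + u.natDegree * padicValRat p t ≤ padicValRat p (u.eval t) := by
  rw [eval_eq_sum_range] at hu ⊢
  refine padicValRat.le_sum (fun i hi hne => ?_) hu
  obtain ⟨hco, hti⟩ := mul_ne_zero_iff.mp hne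
  rw [padicValRat.mul hco hti, padicValRat.pow t]
  have hi : (i : ℤ) ≤ u.natDegree := by exact_mod_cast Nat.lt_succ_iff.mp (Finset.mem_range.mp hi)
  have := hc i hco
  nlinarith

theorem exists_le_padicValRat_eval (u : ℚ[X]) (C : ℤ) :
    ∃ c : ℤ, ∀ t : ℚ, -C ≤ padicValRat p t → padicValRat p t ≤ 0 → u.eval t ≠ 0 →
      c ≤ padicValRat p (u.eval t) := by
  obtain ⟨c, hc⟩ := (u.support.image fun i => padicValRat p (u.coeff i)).bddBelow
  refine ⟨c - u.natDegree * C, fun t htC ht hu => ?_⟩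
  have hc' : ∀ i, u.coeff i ≠ 0 → c ≤ padicValRat p (u.coeff i) := fun i hi =>
    hc (Finset.mem_coe.mpr (Finset.mem_image_of_mem _ (mem_support_iff.mpr hi)))
  have := le_padicValRat_eval hc' ht hu
  have : (u.natDegree : ℤ) * -C ≤ u.natDegree * padicValRat p t :=
    mul_le_mul_of_nonneg_left htC (Int.natCast_nonneg _)
  linarith

theorem exists_padicValRat_eval_le_of_isCoprime {F G : ℚ[X]} (h : IsCoprime F G) (C : ℤ) :
    ∃ E : ℕ, ∀ t : ℚ, -C ≤ padicValRat p t → padicValRat p t ≤ 0 →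
      padicValRat p (F.eval t) ≤ E ∨ padicValRat p (G.eval t) ≤ E := by
  obtain ⟨u, w, huw⟩ := h
  obtain ⟨cu, hcu⟩ := exists_le_padicValRat_eval (p := p) u C
  obtain ⟨cw, hcw⟩ := exists_le_padicValRat_eval (p := p) w C
  refine ⟨(max (-cu) (-cw)).toNat, fun t htC ht => ?_⟩
  have hE := Int.self_le_toNat (max (-cu) (-cw))
  have hid : u.eval t * F.eval t + w.eval t * G.eval t = 1 := by
    simpa using congrArg (eval t) huw
  rcases padicValRat.nonpos_of_add_eq_one (p := p) hid with ⟨hne, hv⟩ | ⟨hne, hv⟩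
  · obtain ⟨hu, hFt⟩ := mul_ne_zero_iff.mp hne
    rw [padicValRat.mul hu hFt] at hv
    have := hcu t htC ht hu
    left
    omega
  · obtain ⟨hw, hGt⟩ := mul_ne_zero_iff.mp hne
    rw [padicValRat.mul hw hGt] at hv
    have := hcw t htC ht hw
    right
    omega

variable {F : ℚ[X]} (hF : ∀ i, 0 ≤ padicValRat p (F.coeff i))
include hF

theorem neg_padicValRat_eval_le {t : ℚ} (ht : padicValRat p t ≤ 0) :
    -padicValRat p (F.eval t) ≤ F.natDegree * -padicValRat p t := by
  by_cases hFt : F.eval t = 0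
  · rw [hFt, padicValRat.zero, neg_zero]
    exact mul_nonneg (Int.natCast_nonneg _) (neg_nonneg.mpr ht)
  have := le_padicValRat_eval (fun i _ => hF i) ht hFt
  linarith

theorem padicValRat_eval_of_lt {t : ℚ} (ht : padicValRat p F.leadingCoeff < -padicValRat p t) :
    padicValRat p (F.eval t) = padicValRat p F.leadingCoeff + F.natDegree * padicValRat p t := by
  by_cases hF0 : F = 0
  · simp [hF0]
  have hvt : padicValRat p t < 0 := by linarith [show 0 ≤ padicValRat p F.leadingCoeff from hF _]
  have ht0 : t ≠ 0 := by
    rintro rfl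
    exact hvt.ne padicValRat.zero
  have hlead : F.leadingCoeff * t ^ F.natDegree ≠ 0 :=
    mul_ne_zero (leadingCoeff_ne_zero.mpr hF0) (pow_ne_zero _ ht0)
  have hvlead : padicValRat p (F.leadingCoeff * t ^ F.natDegree) =
      padicValRat p F.leadingCoeff + F.natDegree * padicValRat p t := by
    rw [padicValRat.mul (leadingCoeff_ne_zero.mpr hF0) (pow_ne_zero _ ht0), padicValRat.pow]
  have heval : F.eval t = F.leadingCoeff * t ^ F.natDegree + F.eraseLead.eval t := by
    conv_lhs => rw [← eraseLead_add_C_mul_X_pow F]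
    rw [eval_add, eval_mul, eval_C, eval_pow, eval_X, add_comm]
  by_cases hrest : F.eraseLead.eval t = 0
  · rw [heval, hrest, add_zero, hvlead]
  have hdeg : F.eraseLead.natDegree < F.natDegree :=
    (eraseLead_natDegree_lt_or_eraseLead_eq_zero F).resolve_right
      fun h => hrest (by rw [h, eval_zero])
  have hrest_val : padicValRat p (F.leadingCoeff * t ^ F.natDegree) <
      padicValRat p (F.eraseLead.eval t) := by
    have hcoeff : ∀ i, F.eraseLead.coeff i ≠ 0 → 0 ≤ padicValRat p (F.eraseLead.coeff i) :=
      fun i _ => by rw [eraseLead_coeff]; split_ifs <;> simp [hF i]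
    have := le_padicValRat_eval hcoeff hvt.le hrest
    have hdeg' : (F.eraseLead.natDegree : ℤ) + 1 ≤ F.natDegree := by exact_mod_cast hdeg
    rw [hvlead]
    nlinarith [mul_le_mul_of_nonpos_right hdeg' hvt.le]
  have hsum : F.leadingCoeff * t ^ F.natDegree + F.eraseLead.eval t ≠ 0 := by
    intro h
    rw [eq_neg_of_add_eq_zero_right h, padicValRat.neg] at hrest_val
    exact lt_irrefl _ hrest_val
  rw [heval, padicValRat.add_eq_of_lt hsum hlead hrest hrest_val, hvlead]

end Polynomial

theorem finite_setOf_padicValInt_ne_zero (z : ℤ) : {p : ℕ | padicValInt p z ≠ 0}.Finite := by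
  refine z.natAbs.divisors.finite_toSet.subset fun p (hp : padicValNat p z.natAbs ≠ 0) => ?_
  refine Nat.mem_divisors.mpr ⟨dvd_of_one_le_padicValNat (Nat.one_le_iff_ne_zero.mpr hp), ?_⟩
  rintro h
  rw [h, padicValNat_zero_right] at hp
  exact hp rfl

theorem padicValRat_coeff_map_intCast_nonneg (p : ℕ) (f : ℤ[X]) (i : ℕ) :
    0 ≤ padicValRat p ((f.map (Int.castRingHom ℚ)).coeff i) := by
  rw [coeff_map, eq_intCast, padicValRat.of_int]
  exact Int.natCast_nonneg _

/-- The least `e` for which `p ^ (2 * e) * F(t)` and `p ^ (3 * e) * G(t)` are `p`-integral, i.e. the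
valuation of the minimal scaling factor `u`; a vanishing value contributes `0`, not `-∞`. -/
def scalingExponent (p : ℕ) (F G : ℚ[X]) (t : ℚ) : ℤ :=
  max ⌈(-(padicValRat p (F.eval t)) : ℚ) / 2⌉ ⌈(-(padicValRat p (G.eval t)) : ℚ) / 3⌉

section ScalingExponent

variable {p : ℕ} [Fact p.Prime] {t : ℚ}

theorem ceil_neg_padicValRat_eval_div_le {H : ℚ[X]} (hH : ∀ i, 0 ≤ padicValRat p (H.coeff i))
    {e q : ℚ} (he : 0 < e) (hq : H.natDegree / e ≤ q) (ht : padicValRat p t ≤ 0) :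
    ⌈(-(padicValRat p (H.eval t)) : ℚ) / e⌉ ≤ ⌈-q * padicValRat p t⌉ := by
  apply Int.ceil_mono
  have hH' : (-(padicValRat p (H.eval t)) : ℚ) ≤ H.natDegree * -(padicValRat p t : ℚ) := by
    exact_mod_cast neg_padicValRat_eval_le hH ht
  have hk : (0 : ℚ) ≤ -(padicValRat p t : ℚ) := by exact_mod_cast neg_nonneg.mpr ht
  calc (-(padicValRat p (H.eval t)) : ℚ) / e ≤ H.natDegree * -(padicValRat p t : ℚ) / e :=
        div_le_div_of_nonneg_right hH' he.le
    _ = H.natDegree / e * -(padicValRat p t : ℚ) := by ring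
    _ ≤ q * -(padicValRat p t : ℚ) := mul_le_mul_of_nonneg_right hq hk
    _ = -q * padicValRat p t := by ring

theorem ceil_le_ceil_neg_padicValRat_eval_div_add {H : ℚ[X]}
    (hH : ∀ i, 0 ≤ padicValRat p (H.coeff i)) {e : ℚ} (he : 1 ≤ e)
    (ht : padicValRat p H.leadingCoeff < -padicValRat p t) :
    ⌈H.natDegree * -(padicValRat p t : ℚ) / e⌉ ≤
      ⌈(-(padicValRat p (H.eval t)) : ℚ) / e⌉ + padicValRat p H.leadingCoeff := by
  rw [padicValRat_eval_of_lt hH ht, ← Int.ceil_add_intCast]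
  apply Int.ceil_mono
  have hα : (0 : ℚ) ≤ padicValRat p H.leadingCoeff := by exact_mod_cast hH _
  have := div_le_self hα he
  have : -((padicValRat p H.leadingCoeff + H.natDegree * padicValRat p t : ℤ) : ℚ) / e +
      padicValRat p H.leadingCoeff = H.natDegree * -(padicValRat p t : ℚ) / e +
        (padicValRat p H.leadingCoeff - padicValRat p H.leadingCoeff / e) := by
    push_cast
    ring
  linarith

variable {F G : ℚ[X]} {q : ℚ}

theorem scalingExponent_le (hF : ∀ i, 0 ≤ padicValRat p (F.coeff i))
    (hG : ∀ i, 0 ≤ padicValRat p (G.coeff i))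
    (hq : max ((F.natDegree : ℚ) / 2) ((G.natDegree : ℚ) / 3) = q) (ht : padicValRat p t ≤ 0) :
    scalingExponent p F G t ≤ ⌈-q * padicValRat p t⌉ :=
  max_le (ceil_neg_padicValRat_eval_div_le hF two_pos (hq ▸ le_max_left _ _) ht)
    (ceil_neg_padicValRat_eval_div_le hG three_pos (hq ▸ le_max_right _ _) ht)

theorem ceil_le_scalingExponent_add (hF : ∀ i, 0 ≤ padicValRat p (F.coeff i))
    (hG : ∀ i, 0 ≤ padicValRat p (G.coeff i))
    (hq : max ((F.natDegree : ℚ) / 2) ((G.natDegree : ℚ) / 3) = q)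
    (ht : max (padicValRat p F.leadingCoeff) (padicValRat p G.leadingCoeff) < -padicValRat p t) :
    ⌈-q * padicValRat p t⌉ ≤ scalingExponent p F G t +
      max (padicValRat p F.leadingCoeff) (padicValRat p G.leadingCoeff) := by
  have hk : (0 : ℚ) ≤ -(padicValRat p t : ℚ) := by
    have hα : 0 ≤ padicValRat p F.leadingCoeff := hF _
    exact_mod_cast ((le_max_of_le_left hα).trans ht.le)
  have hmax : -q * padicValRat p t =
      max (F.natDegree * -(padicValRat p t : ℚ) / 2)
        (G.natDegree * -(padicValRat p t : ℚ) / 3) := by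
    rw [← hq, neg_mul, ← mul_neg, max_mul_of_nonneg _ _ hk]
    congr 1 <;> ring
  rw [hmax, Int.ceil_mono.map_max]
  apply max_le
  · exact (ceil_le_ceil_neg_padicValRat_eval_div_add hF one_le_two
      ((le_max_left _ _).trans_lt ht)).trans (add_le_add (le_max_left _ _) (le_max_left _ _))
  · exact (ceil_le_ceil_neg_padicValRat_eval_div_add hG (by norm_num)
      ((le_max_right _ _).trans_lt ht)).trans (add_le_add (le_max_right _ _) (le_max_right _ _))

theorem exists_ceil_le_scalingExponent_add (hFG : IsCoprime F G)
    (hq : max ((F.natDegree : ℚ) / 2) ((G.natDegree : ℚ) / 3) = q) (C : ℤ) :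
    ∃ B : ℤ, ∀ t : ℚ, padicValRat p t ≤ 0 → -padicValRat p t ≤ C →
      ⌈-q * padicValRat p t⌉ ≤ scalingExponent p F G t + B := by
  obtain ⟨E, hE⟩ := exists_padicValRat_eval_le_of_isCoprime (p := p) hFG C
  refine ⟨⌈q * C⌉ + E, fun t ht htC => ?_⟩
  have hq0 : 0 ≤ q := hq ▸ le_max_of_le_left (div_nonneg (Nat.cast_nonneg _) zero_le_two)
  have hT : ⌈-q * padicValRat p t⌉ ≤ ⌈q * C⌉ := by
    refine Int.ceil_mono ?_
    rw [neg_mul, ← mul_neg]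
    exact mul_le_mul_of_nonneg_left (by exact_mod_cast htC) hq0
  have hbound : ∀ (x : ℤ) (e : ℚ), 1 ≤ e → x ≤ E → -(E : ℤ) ≤ ⌈(-x : ℚ) / e⌉ := by
    intro x e he hx
    rw [← Int.ceil_intCast (R := ℚ) (-(E : ℤ))]
    refine Int.ceil_mono ?_
    have hE0 : (0 : ℚ) ≤ E := E.cast_nonneg
    have hxE : (-E : ℚ) ≤ -x := by exact_mod_cast neg_le_neg hx
    calc ((-(E : ℤ) : ℤ) : ℚ) = -E := by push_cast; ring
      _ ≤ -E / e := by rw [neg_div, neg_le_neg_iff]; exact div_le_self hE0 he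
      _ ≤ -x / e := div_le_div_of_nonneg_right hxE (by linarith)
  have hM : -(E : ℤ) ≤ scalingExponent p F G t := by
    rcases hE t (by linarith) ht with h | h
    · exact (hbound _ 2 one_le_two h).trans (le_max_left _ _)
    · exact (hbound _ 3 (by norm_num) h).trans (le_max_right _ _)
  linarith

theorem exists_abs_scalingExponent_sub_le (hF : ∀ i, 0 ≤ padicValRat p (F.coeff i))
    (hG : ∀ i, 0 ≤ padicValRat p (G.coeff i)) (hFG : IsCoprime F G)
    (hq : max ((F.natDegree : ℚ) / 2) ((G.natDegree : ℚ) / 3) = q) :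
    ∃ K : ℕ, (K ≠ 0 → padicValRat p F.leadingCoeff ≠ 0 ∨ padicValRat p G.leadingCoeff ≠ 0) ∧
      ∀ t : ℚ, padicValRat p t < 0 →
        |scalingExponent p F G t - ⌈-q * padicValRat p t⌉| ≤ K := by
  set C := max (padicValRat p F.leadingCoeff) (padicValRat p G.leadingCoeff) with hC
  obtain ⟨B, hB⟩ := exists_ceil_le_scalingExponent_add (p := p) hFG hq C
  refine ⟨if C = 0 then 0 else (max C B).toNat, fun hK => ?_, fun t ht => ?_⟩
  · contrapose! hK
    simp [hC, hK]
  have hCB := (le_max_left C B).trans (Int.self_le_toNat (max C B))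
  have hBC := (le_max_right C B).trans (Int.self_le_toNat (max C B))
  rw [abs_sub_le_iff]
  refine ⟨(sub_nonpos.mpr (scalingExponent_le hF hG hq ht.le)).trans (Int.natCast_nonneg _), ?_⟩
  by_cases hfar : C < -padicValRat p t
  · have := ceil_le_scalingExponent_add hF hG hq hfar
    split_ifs with hC0 <;> push_cast <;> omega
  · have hC0 : C ≠ 0 := by omega
    have := hB t ht.le (not_lt.mp hfar)
    rw [if_neg hC0]
    omega

end ScalingExponent

theorem stmt_16_general (f g : Polynomial ℤ)
    (hfg : IsCoprime (f.map (Int.castRingHom ℚ)) (g.map (Int.castRingHom ℚ)))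
    (m n : ℕ)
    (hmax : max ((f.natDegree : ℚ) / 2) ((g.natDegree : ℚ) / 3) = (n : ℚ) / m) :
    ∃ K : ℕ → ℕ, {p : ℕ | p.Prime ∧ K p ≠ 0}.Finite ∧
      ∀ p : ℕ, p.Prime → ∀ t : ℚ, t ≠ 0 → padicValRat p t < 0 →
        |max ⌈(-(padicValRat p ((f.map (Int.castRingHom ℚ)).eval t)) : ℚ) / 2⌉
            ⌈(-(padicValRat p ((g.map (Int.castRingHom ℚ)).eval t)) : ℚ) / 3⌉ -
          ⌈-((n : ℚ) / m) * (padicValRat p t : ℚ)⌉| ≤ (K p : ℤ) := by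
  have hinj : Function.Injective (Int.castRingHom ℚ) := Int.cast_injective
  have hq : max (((f.map (Int.castRingHom ℚ)).natDegree : ℚ) / 2)
      (((g.map (Int.castRingHom ℚ)).natDegree : ℚ) / 3) = (n : ℚ) / m := by
    rwa [natDegree_map_eq_of_injective hinj, natDegree_map_eq_of_injective hinj]
  have hK : ∀ p : ℕ, ∃ K : ℕ, p.Prime →
      (K ≠ 0 → padicValInt p f.leadingCoeff ≠ 0 ∨ padicValInt p g.leadingCoeff ≠ 0) ∧
      ∀ t : ℚ, padicValRat p t < 0 →
        |scalingExponent p (f.map (Int.castRingHom ℚ)) (g.map (Int.castRingHom ℚ)) t -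
          ⌈-((n : ℚ) / m) * padicValRat p t⌉| ≤ K := by
    intro p
    by_cases hp : p.Prime
    · have := Fact.mk hp
      obtain ⟨K, hK0, hK⟩ := exists_abs_scalingExponent_sub_le
        (padicValRat_coeff_map_intCast_nonneg p f) (padicValRat_coeff_map_intCast_nonneg p g) hfg hq
      simp only [leadingCoeff_map_of_injective hinj, eq_intCast, padicValRat.of_int,
        Nat.cast_ne_zero] at hK0
      exact ⟨K, fun _ => ⟨hK0, hK⟩⟩
    · exact ⟨0, fun h => absurd h hp⟩
  choose K hK using hK
  refine ⟨K, ?_, fun p hp t _ ht => (hK p hp).2 t ht⟩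
  exact ((finite_setOf_padicValInt_ne_zero _).union (finite_setOf_padicValInt_ne_zero _)).subset
    fun p ⟨hp, hKp⟩ => (hK p hp).1 hKp

/-- Let `f, g ∈ ℤ[t]` be coprime of degrees `r, s` with `max(r/2, s/3) = n/m` in lowest
terms. For every prime `p` there is `K_p ≥ 0`, zero for all but finitely many `p`, with
`|max(⌈−v_p(f(t))/2⌉, ⌈−v_p(g(t))/3⌉) − ⌈−(n/m)v_p(t)⌉| ≤ K_p` whenever `v_p(t) < 0`. -/
theorem stmt_16 (f g : Polynomial ℤ)
    (hfg : IsCoprime (f.map (Int.castRingHom ℚ)) (g.map (Int.castRingHom ℚ)))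
    (hdeg : 0 < max f.natDegree g.natDegree) (m n : ℕ) (hm : 0 < m) (hn : 0 < n)
    (hmn : Nat.Coprime m n)
    (hmax : max ((f.natDegree : ℚ) / 2) ((g.natDegree : ℚ) / 3) = (n : ℚ) / m) :
    ∃ K : ℕ → ℕ, {p : ℕ | p.Prime ∧ K p ≠ 0}.Finite ∧
      ∀ p : ℕ, p.Prime → ∀ t : ℚ, t ≠ 0 → padicValRat p t < 0 →
        |max ⌈(-(padicValRat p ((f.map (Int.castRingHom ℚ)).eval t)) : ℚ) / 2⌉
            ⌈(-(padicValRat p ((g.map (Int.castRingHom ℚ)).eval t)) : ℚ) / 3⌉ -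
          ⌈-((n : ℚ) / m) * (padicValRat p t : ℚ)⌉| ≤ (K p : ℤ) :=
  stmt_16_general f g hfg m n hmax
end
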